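/- arXiv:1605.02981 — 2 statements merged into one kernel-verified Lean document; each statement's English description precedes it below -/
import Mathlib

section
/- If R_m = R_{m−1} for some m ≥ 2, then R_{m'} = R_{m'−1} for every m' ≥ m: once adding an additional life to the fixed item no longer reduces the number of heaps, no further additional lives can reduce it. -/
open MeasureTheory ProbabilityTheory Filter Topology
open scoped ENNReal NNReal

namespace HeapPatience

/-- Decrement by one the number of lives of the (first) alive particle with label `x`. -/
noncomputable def decrementAt : List (ℝ × ℕ) → ℝ → List (ℝ × ℕ)
  | [], _ => []
  | p :: rest, x =>
      if p.1 = x ∧ 0 < p.2 then (p.1, p.2 - 1) :: rest else p :: decrementAt rest x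

/-- One step of the heap patience sorting algorithm, where `acc = (state, number of roots)`:
the new item is attached as a child of the alive particle (a particle with at least one
remaining life) having the largest label smaller than the label of the item, and that
particle loses one life; if there is no such particle, a new root (tree) is created. -/
noncomputable def step (acc : List (ℝ × ℕ) × ℕ) (item : ℝ × ℕ) : List (ℝ × ℕ) × ℕ :=
  match (acc.1.filter fun p => decide (0 < p.2 ∧ p.1 < item.1)).argmax Prod.fst with
  | none => (item :: acc.1, acc.2 + 1)
  | some q => (item :: decrementAt acc.1 q.1, acc.2)

/-- Run the heap patience sorting algorithm on the items `(label, lives)` in order; returns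
the final state (the particles with their remaining lives) and the number of roots created. -/
noncomputable def run (items : List (ℝ × ℕ)) : List (ℝ × ℕ) × ℕ :=
  items.foldl step ([], 0)

/-- `R items` : the number of heaps (trees) produced by the heap patience sorting
algorithm applied to the finite sequence `items` of pairs `(label, number of lives)`. -/
noncomputable def R (items : List (ℝ × ℕ)) : ℕ := (run items).2

/-- `D items` : after running the algorithm, the number of dead particles whose label is
smaller than the label of every alive particle, i.e. the number of leading zeros of the
label-ordered vector of remaining lives. -/
noncomputable def D (items : List (ℝ × ℕ)) : ℕ :=
  ((run items).1.filter fun p =>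
      decide (p.2 = 0 ∧ ∀ q ∈ (run items).1, 0 < q.2 → p.1 < q.1)).length

/-- `Rn U ν n ω` : the random number of heaps `𝐑(n)` needed to sort the first `n`
random items `(U i ω, ν i ω)`. -/
noncomputable def Rn {Ω : Type} (U : ℕ → Ω → ℝ) (ν : ℕ → Ω → ℕ) (n : ℕ) (ω : Ω) : ℕ :=
  R ((List.range n).map fun i => (U i ω, ν i ω))

/-- `Dn U ν n ω` : the random variable `D_n`, the number of dead items whose label is
smaller than the label of every alive item after sorting the first `n` random items. -/
noncomputable def Dn {Ω : Type} (U : ℕ → Ω → ℝ) (ν : ℕ → Ω → ℕ) (n : ℕ) (ω : Ω) : ℕ :=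
  D ((List.range n).map fun i => (U i ω, ν i ω))

/-- The uniform probability measure on the interval `(0,1)`. -/
noncomputable def unif01 : Measure ℝ := volume.restrict (Set.Ioo 0 1)

/-!
Compare the runs in which the fixed item has `k`, `k + 1` and `k + 2` lives. Right after that
item, each run differs from the next one by a single extra life, on the fixed item. When a
further item is processed, two runs differing by one extra life at label `w` either still differ
by one extra life, at `w` or at the common parent `w' < w` of the item, with equal numbers of
roots; or the poorer run opens a root exactly where the richer one spends its extra life, after
which the two runs coincide and the poorer one has one more root. The extra life of the lower
pair sits at a label no larger than that of the upper pair and is alive in the middle run, so the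
upper pair cannot split off a root while the lower pair is still coupled. Hence either all three
runs end with the same number of roots, or the first has one more than the second.
-/

lemma _root_.List.map_argmax_eq_maximum_map {α β : Type*} [LinearOrder β] (f : α → β)
    (l : List α) :
    (l.argmax f).map f = (l.map f).maximum := by
  cases h : l.argmax f with
  | none => rw [List.argmax_eq_none.mp h]; rfl
  | some m =>
    refine (List.maximum_eq_coe_iff.mpr ⟨List.mem_map_of_mem (List.argmax_mem h), ?_⟩).symm
    simp only [List.mem_map, forall_exists_index, and_imp, forall_apply_eq_imp_iff₂]
    exact fun a ha => List.le_of_mem_argmax ha h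

/-- The label of the particle that an item with label `x` arriving in state `s` is attached to;
`⊥` when it opens a new root. -/
noncomputable def parentLabel (s : List (ℝ × ℕ)) (x : ℝ) : WithBot ℝ :=
  ((s.filter fun p => decide (0 < p.2 ∧ p.1 < x)).map Prod.fst).maximum

lemma step_of_parentLabel_eq_bot {s : List (ℝ × ℕ)} {it : ℝ × ℕ} (h : parentLabel s it.1 = ⊥)
    (c : ℕ) : step (s, c) it = (it :: s, c + 1) := by
  rw [parentLabel, ← List.map_argmax_eq_maximum_map] at h
  cases hq : (s.filter fun p => decide (0 < p.2 ∧ p.1 < it.1)).argmax Prod.fst with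
  | none => simp only [step, hq]
  | some q => rw [hq] at h; exact absurd h WithBot.coe_ne_bot

lemma step_of_parentLabel_eq_coe {s : List (ℝ × ℕ)} {it : ℝ × ℕ} {x : ℝ}
    (h : parentLabel s it.1 = x) (c : ℕ) : step (s, c) it = (it :: decrementAt s x, c) := by
  rw [parentLabel, ← List.map_argmax_eq_maximum_map] at h
  cases hq : (s.filter fun p => decide (0 < p.2 ∧ p.1 < it.1)).argmax Prod.fst with
  | none => rw [hq] at h; exact absurd h.symm WithBot.coe_ne_bot
  | some q => rw [hq] at h; simp only [step, hq, WithBot.coe_inj.mp h]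

def IsAlive (s : List (ℝ × ℕ)) (x : ℝ) : Prop := ∃ p ∈ s, p.1 = x ∧ 0 < p.2

lemma coe_le_parentLabel {s : List (ℝ × ℕ)} {x y : ℝ} (hx : IsAlive s x) (hxy : x < y) :
    (x : WithBot ℝ) ≤ parentLabel s y := by
  obtain ⟨p, hp, rfl, hpos⟩ := hx
  exact List.le_maximum_of_mem'
    (List.mem_map_of_mem (List.mem_filter.mpr ⟨hp, by simp [hpos, hxy]⟩))

lemma isAlive_of_parentLabel_eq_coe {s : List (ℝ × ℕ)} {x y : ℝ} (h : parentLabel s y = x) :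
    IsAlive s x := by
  obtain ⟨p, hp, rfl⟩ := List.mem_map.mp (List.maximum_mem h)
  simp only [List.mem_filter, decide_eq_true_eq] at hp
  exact ⟨p, hp.1, rfl, hp.2.1⟩

lemma isAlive_cons {p : ℝ × ℕ} {s : List (ℝ × ℕ)} {x : ℝ} :
    IsAlive (p :: s) x ↔ (p.1 = x ∧ 0 < p.2) ∨ IsAlive s x := by
  simp [IsAlive]

lemma parentLabel_le_iff {s : List (ℝ × ℕ)} {x : ℝ} {b : WithBot ℝ} :
    parentLabel s x ≤ b ↔ ∀ y, IsAlive s y → y < x → (y : WithBot ℝ) ≤ b := by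
  refine ⟨fun h y hy hyx => (coe_le_parentLabel hy hyx).trans h, fun h => ?_⟩
  refine List.maximum_le_of_forall_le fun y hy => ?_
  obtain ⟨p, hp, rfl⟩ := List.mem_map.mp hy
  simp only [List.mem_filter, decide_eq_true_eq] at hp
  exact h p.1 ⟨p, hp.1, rfl, hp.2.1⟩ hp.2.2

def ExtraLife (s t : List (ℝ × ℕ)) (w : ℝ) : Prop :=
  ∃ l k r, s = l ++ (w, k) :: r ∧ t = l ++ (w, k + 1) :: r

lemma ExtraLife.cons {s t : List (ℝ × ℕ)} {w : ℝ} (h : ExtraLife s t w) (p : ℝ × ℕ) :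
    ExtraLife (p :: s) (p :: t) w := by
  obtain ⟨l, k, r, rfl, rfl⟩ := h
  exact ⟨p :: l, k, r, rfl, rfl⟩

lemma ExtraLife.isAlive_right {s t : List (ℝ × ℕ)} {w : ℝ} (h : ExtraLife s t w) :
    IsAlive t w := by
  obtain ⟨l, k, r, -, rfl⟩ := h
  exact ⟨(w, k + 1), by simp, rfl, k.succ_pos⟩

lemma extraLife_decrementAt_self {s : List (ℝ × ℕ)} {x : ℝ} (h : IsAlive s x) :
    ExtraLife (decrementAt s x) s x := by
  induction s with
  | nil => simp [IsAlive] at h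
  | cons p s ih =>
    by_cases hp : p.1 = x ∧ 0 < p.2
    · obtain ⟨⟨y, k⟩⟩ := p
      obtain ⟨rfl, hk⟩ := hp
      obtain ⟨k, rfl⟩ := Nat.exists_eq_add_one_of_ne_zero hk.ne'
      exact ⟨[], k, s, by simp [decrementAt], rfl⟩
    · rw [decrementAt, if_neg hp]
      exact (ih ((isAlive_cons.mp h).resolve_left hp)).cons p

lemma ExtraLife.decrementAt {s t : List (ℝ × ℕ)} {w x : ℝ} (h : ExtraLife s t w)
    (hx : IsAlive s x) : ExtraLife (decrementAt s x) (decrementAt t x) w := by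
  obtain ⟨l, k, r, rfl, rfl⟩ := h
  induction l with
  | nil =>
    simp only [List.nil_append] at hx ⊢
    by_cases hxw : w = x
    · subst hxw
      rcases Nat.eq_zero_or_pos k with rfl | hk
      · have hr : IsAlive r w := (isAlive_cons.mp hx).resolve_left (by simp)
        simpa [HeapPatience.decrementAt] using (extraLife_decrementAt_self hr).cons (w, 0)
      · obtain ⟨k, rfl⟩ := Nat.exists_eq_add_one_of_ne_zero hk.ne'
        exact ⟨[], k, r, by simp [HeapPatience.decrementAt], by simp [HeapPatience.decrementAt]⟩
    · exact ⟨[], k, HeapPatience.decrementAt r x, by simp [HeapPatience.decrementAt, hxw],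
        by simp [HeapPatience.decrementAt, hxw]⟩
  | cons p l ih =>
    simp only [List.cons_append]
    by_cases hp : p.1 = x ∧ 0 < p.2
    · rw [HeapPatience.decrementAt, HeapPatience.decrementAt, if_pos hp, if_pos hp]
      exact ⟨(p.1, p.2 - 1) :: l, k, r, rfl, rfl⟩
    · rw [HeapPatience.decrementAt, HeapPatience.decrementAt, if_neg hp, if_neg hp]
      exact (ih ((isAlive_cons.mp hx).resolve_left hp)).cons p

lemma ExtraLife.decrementAt_right {s t : List (ℝ × ℕ)} {w : ℝ} (h : ExtraLife s t w)
    (hw : ¬IsAlive s w) : HeapPatience.decrementAt t w = s := by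
  obtain ⟨l, k, r, rfl, rfl⟩ := h
  induction l with
  | nil =>
    obtain rfl : k = 0 := by by_contra hk; exact hw ⟨(w, k), by simp, rfl, Nat.pos_of_ne_zero hk⟩
    simp [HeapPatience.decrementAt]
  | cons p l ih =>
    have hp : ¬(p.1 = w ∧ 0 < p.2) := fun hp => hw (isAlive_cons.mpr (Or.inl hp))
    rw [List.cons_append, List.cons_append, HeapPatience.decrementAt, if_neg hp,
      ih fun h => hw (isAlive_cons.mpr (Or.inr h))]

lemma ExtraLife.isAlive_right_iff {s t : List (ℝ × ℕ)} {w y : ℝ} (h : ExtraLife s t w) :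
    IsAlive t y ↔ IsAlive s y ∨ y = w := by
  obtain ⟨l, k, r, rfl, rfl⟩ := h
  simp only [IsAlive, List.mem_append, List.mem_cons]
  constructor
  · rintro ⟨p, (hp | rfl | hp), rfl, hpos⟩
    exacts [Or.inl ⟨p, Or.inl hp, rfl, hpos⟩, Or.inr rfl,
      Or.inl ⟨p, Or.inr (Or.inr hp), rfl, hpos⟩]
  · rintro (⟨p, (hp | rfl | hp), rfl, hpos⟩ | rfl)
    exacts [⟨p, Or.inl hp, rfl, hpos⟩, ⟨(_, k + 1), Or.inr (Or.inl rfl), rfl, k.succ_pos⟩,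
      ⟨p, Or.inr (Or.inr hp), rfl, hpos⟩, ⟨(y, k + 1), Or.inr (Or.inl rfl), rfl, k.succ_pos⟩]

lemma ExtraLife.parentLabel_right_of_lt {s t : List (ℝ × ℕ)} {w x : ℝ} (h : ExtraLife s t w)
    (hwx : w < x) : parentLabel t x = max ↑w (parentLabel s x) := by
  refine eq_of_forall_ge_iff fun c => ?_
  simp only [parentLabel_le_iff, max_le_iff, h.isAlive_right_iff]
  constructor
  · exact fun H => ⟨H w (Or.inr rfl) hwx, fun y hy => H y (Or.inl hy)⟩
  · rintro ⟨hw, H⟩ y (hy | rfl) hyx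
    exacts [H y hy hyx, hw]

lemma ExtraLife.parentLabel_right_of_le {s t : List (ℝ × ℕ)} {w x : ℝ} (h : ExtraLife s t w)
    (hxw : x ≤ w) : parentLabel t x = parentLabel s x := by
  refine eq_of_forall_ge_iff fun c => ?_
  simp only [parentLabel_le_iff, h.isAlive_right_iff]
  constructor
  · exact fun H y hy => H y (Or.inl hy)
  · rintro H y (hy | rfl) hyx
    exacts [H y hy hyx, absurd hxw (not_le.mpr hyx)]

lemma ExtraLife.step_of_parentLabel_eq {s t : List (ℝ × ℕ)} {w : ℝ} {it : ℝ × ℕ}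
    (h : ExtraLife s t w) (hP : parentLabel t it.1 = parentLabel s it.1) (c : ℕ) :
    ExtraLife (step (s, c) it).1 (step (t, c) it).1 w ∧
      (step (s, c) it).2 = (step (t, c) it).2 := by
  cases hx : parentLabel s it.1 using WithBot.recBotCoe with
  | bot =>
    rw [step_of_parentLabel_eq_bot hx, step_of_parentLabel_eq_bot (hP.trans hx)]
    exact ⟨h.cons it, rfl⟩
  | coe x =>
    rw [step_of_parentLabel_eq_coe hx, step_of_parentLabel_eq_coe (hP.trans hx)]
    exact ⟨(h.decrementAt (isAlive_of_parentLabel_eq_coe hx)).cons it, rfl⟩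

lemma ExtraLife.step_cases {s t : List (ℝ × ℕ)} {w : ℝ} (h : ExtraLife s t w) (it : ℝ × ℕ)
    (c : ℕ) :
    (∃ w', ExtraLife (step (s, c) it).1 (step (t, c) it).1 w' ∧
        (step (s, c) it).2 = (step (t, c) it).2 ∧
        (w' = w ∨ (w < it.1 ∧ w' < w ∧ parentLabel s it.1 = w'))) ∨
      (w < it.1 ∧ parentLabel s it.1 = ⊥ ∧
        step (s, c) it = (it :: s, c + 1) ∧ step (t, c) it = (it :: s, c)) := by
  by_cases hsame : parentLabel t it.1 = parentLabel s it.1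
  · obtain ⟨hlife, hroots⟩ := h.step_of_parentLabel_eq hsame c
    exact Or.inl ⟨w, hlife, hroots, Or.inl rfl⟩
  have hwx : w < it.1 := by
    by_contra hxw
    exact hsame (h.parentLabel_right_of_le (not_lt.mp hxw))
  have hPt := h.parentLabel_right_of_lt hwx
  have hlt : parentLabel s it.1 < w := by
    by_contra hle
    exact hsame (hPt.trans (max_eq_right (not_lt.mp hle)))
  have hstep_t : step (t, c) it = (it :: s, c) := by
    rw [step_of_parentLabel_eq_coe (hPt.trans (max_eq_left hlt.le)),
      h.decrementAt_right fun hw => (coe_le_parentLabel hw hwx).not_gt hlt]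
  cases hx : parentLabel s it.1 using WithBot.recBotCoe with
  | bot => exact Or.inr ⟨hwx, rfl, step_of_parentLabel_eq_bot hx c, hstep_t⟩
  | coe x =>
    rw [hx, WithBot.coe_lt_coe] at hlt
    rw [step_of_parentLabel_eq_coe hx, hstep_t]
    exact Or.inl ⟨x, (extraLife_decrementAt_self (isAlive_of_parentLabel_eq_coe hx)).cons it,
      rfl, Or.inr ⟨hwx, hlt, rfl⟩⟩

lemma step_succ_counter (s : List (ℝ × ℕ)) (c : ℕ) (it : ℝ × ℕ) :
    step (s, c + 1) it = ((step (s, c) it).1, (step (s, c) it).2 + 1) := by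
  cases hx : parentLabel s it.1 using WithBot.recBotCoe with
  | bot => simp only [step_of_parentLabel_eq_bot hx]
  | coe x => simp only [step_of_parentLabel_eq_coe hx]

def TripleCoupling (a₁ a₂ a₃ : List (ℝ × ℕ) × ℕ) : Prop :=
  (∃ w₁ w₂, w₁ ≤ w₂ ∧ ExtraLife a₁.1 a₂.1 w₁ ∧ ExtraLife a₂.1 a₃.1 w₂ ∧
      a₁.2 = a₂.2 ∧ a₂.2 = a₃.2) ∨
    (a₁.1 = a₂.1 ∧ a₁.2 = a₂.2 + 1)

lemma TripleCoupling.step {a₁ a₂ a₃ : List (ℝ × ℕ) × ℕ} (h : TripleCoupling a₁ a₂ a₃)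
    (it : ℝ × ℕ) :
    TripleCoupling (HeapPatience.step a₁ it) (HeapPatience.step a₂ it)
      (HeapPatience.step a₃ it) := by
  obtain ⟨s₁, c₁⟩ := a₁
  obtain ⟨s₂, c₂⟩ := a₂
  obtain ⟨s₃, c₃⟩ := a₃
  rcases h with ⟨w₁, w₂, hw, h₁₂, h₂₃, hc₁₂, hc₂₃⟩ | ⟨hs₁₂, hc₁₂⟩
  all_goals dsimp only at *
  · subst hc₁₂ hc₂₃
    have hw₁ : IsAlive s₂ w₁ := h₁₂.isAlive_right
    rcases h₁₂.step_cases it c₁ with ⟨w₁', h₁₂', hc₁₂, hw₁'⟩ | ⟨-, -, hstep₁, hstep₂⟩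
    · rcases h₂₃.step_cases it c₁ with ⟨w₂', h₂₃', hc₂₃, hw₂'⟩ | ⟨hwx, hbot, -⟩
      · have hw₁'w₁ : w₁' ≤ w₁ := by
          rcases hw₁' with rfl | ⟨-, hlt, -⟩
          exacts [le_rfl, hlt.le]
        refine Or.inl ⟨w₁', w₂', ?_, h₁₂', h₂₃', hc₁₂, hc₂₃⟩
        rcases hw₂' with rfl | ⟨hwx, -, hP⟩
        · exact hw₁'w₁.trans hw
        · exact hw₁'w₁.trans
            (WithBot.coe_le_coe.mp (hP ▸ coe_le_parentLabel hw₁ (hw.trans_lt hwx)))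
      · -- `w₁ ≤ w₂` is alive in the middle run, so the middle run cannot open a root here.
        have := coe_le_parentLabel hw₁ (hw.trans_lt hwx)
        rw [hbot] at this
        exact absurd this (WithBot.not_coe_le_bot _)
    · rw [hstep₁, hstep₂]
      exact Or.inr ⟨rfl, rfl⟩
  · subst hs₁₂ hc₁₂
    rw [step_succ_counter]
    exact Or.inr ⟨rfl, rfl⟩

lemma TripleCoupling.foldl {a₁ a₂ a₃ : List (ℝ × ℕ) × ℕ} (h : TripleCoupling a₁ a₂ a₃)
    (items : List (ℝ × ℕ)) :
    TripleCoupling (items.foldl HeapPatience.step a₁) (items.foldl HeapPatience.step a₂)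
      (items.foldl HeapPatience.step a₃) := by
  induction items generalizing a₁ a₂ a₃ with
  | nil => exact h
  | cons it items ih => exact ih (h.step it)

lemma TripleCoupling.snd_eq {a₁ a₂ a₃ : List (ℝ × ℕ) × ℕ} (h : TripleCoupling a₁ a₂ a₃)
    (h₁₂ : a₁.2 = a₂.2) : a₂.2 = a₃.2 := by
  rcases h with ⟨-, -, -, -, -, -, h₂₃⟩ | ⟨-, h₁₂'⟩
  exacts [h₂₃, absurd (h₁₂.symm.trans h₁₂') (Nat.succ_ne_self _).symm]

lemma tripleCoupling_step_lives (a : List (ℝ × ℕ) × ℕ) (x : ℝ) (k : ℕ) :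
    TripleCoupling (step a (x, k)) (step a (x, k + 1)) (step a (x, k + 2)) := by
  obtain ⟨s, c⟩ := a
  have hchain : ∀ s' c', TripleCoupling ((x, k) :: s', c') ((x, k + 1) :: s', c')
      ((x, k + 2) :: s', c') :=
    fun s' c' => Or.inl ⟨x, x, le_rfl, ⟨[], k, s', rfl, rfl⟩, ⟨[], k + 1, s', rfl, rfl⟩, rfl, rfl⟩
  cases hx : parentLabel s x using WithBot.recBotCoe with
  | bot =>
    simp only [step_of_parentLabel_eq_bot (it := (x, _)) hx]
    exact hchain _ _
  | coe y =>
    simp only [step_of_parentLabel_eq_coe (it := (x, _)) hx]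
    exact hchain _ _

lemma R_add_two_lives_eq_of_add_one_lives_eq (pre suf : List (ℝ × ℕ)) (x : ℝ) (k : ℕ)
    (h : R (pre ++ (x, k + 1) :: suf) = R (pre ++ (x, k) :: suf)) :
    R (pre ++ (x, k + 2) :: suf) = R (pre ++ (x, k + 1) :: suf) := by
  simp only [R, run, List.foldl_append, List.foldl_cons] at h ⊢
  exact (((tripleCoupling_step_lives _ x k).foldl suf).snd_eq h.symm).symm

lemma exists_items_eq_append_cons {n : ℕ} (u : Fin n → ℝ) (v : Fin n → ℕ) (i₀ : Fin n) :
    ∃ pre suf : List (ℝ × ℕ), ∀ m : ℕ,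
      (List.finRange n).map (fun i => (u i, if i = i₀ then m else v i)) =
        pre ++ (u i₀, m) :: suf := by
  obtain ⟨A, B, hAB⟩ := List.append_of_mem (List.mem_finRange i₀)
  have hi₀ : i₀ ∉ A ∧ i₀ ∉ B := by
    have := List.nodup_finRange n
    rw [hAB, List.nodup_middle, List.nodup_cons, List.mem_append] at this
    exact not_or.mp this.1
  refine ⟨A.map fun i => (u i, v i), B.map fun i => (u i, v i), fun m => ?_⟩
  rw [hAB, List.map_append, List.map_cons, if_pos rfl]
  congr 1
  · exact List.map_congr_left fun i hi => by rw [if_neg (ne_of_mem_of_not_mem hi hi₀.1)]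
  · congr 1
    exact List.map_congr_left fun i hi => by rw [if_neg (ne_of_mem_of_not_mem hi hi₀.2)]

theorem R_extra_life_stabilizes_general
    (n : ℕ) (u : Fin n → ℝ)
    (i₀ : Fin n) (v : Fin n → ℕ)
    (Rm : ℕ → ℕ)
    (hRm : ∀ m : ℕ,
      Rm m = R ((List.finRange n).map fun i => (u i, if i = i₀ then m else v i))) :
    ∀ m : ℕ, 2 ≤ m → Rm m = Rm (m - 1) →
      ∀ m' : ℕ, m ≤ m' → Rm m' = Rm (m' - 1) := by
  obtain ⟨pre, suf, hitems⟩ := exists_items_eq_append_cons u v i₀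
  have hstable : ∀ k, Rm (k + 1) = Rm k → Rm (k + 2) = Rm (k + 1) := by
    simp only [hRm, hitems]
    exact R_add_two_lives_eq_of_add_one_lives_eq pre suf (u i₀)
  intro m hm hRm_eq m' hmm'
  induction m', hmm' using Nat.le_induction with
  | base => exact hRm_eq
  | succ m' hmm' ih =>
    obtain ⟨k, rfl⟩ : ∃ k, m' = k + 1 := ⟨m' - 1, by omega⟩
    exact hstable k ih

/-- Once an extra life for the fixed item no longer reduces the number of heaps,
no further extra lives can reduce it. -/
theorem R_extra_life_stabilizes
    (n : ℕ) (hn : 1 ≤ n) (u : Fin n → ℝ)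
    (hu : ∀ i, u i ∈ Set.Ioo (0 : ℝ) 1) (huinj : Function.Injective u)
    (i₀ : Fin n) (v : Fin n → ℕ) (hv : ∀ i, i ≠ i₀ → 1 ≤ v i)
    (Rm : ℕ → ℕ)
    (hRm : ∀ m : ℕ,
      Rm m = R ((List.finRange n).map fun i => (u i, if i = i₀ then m else v i))) :
    ∀ m : ℕ, 2 ≤ m → Rm m = Rm (m - 1) →
      ∀ m' : ℕ, m ≤ m' → Rm m' = Rm (m' - 1) :=
  R_extra_life_stabilizes_general n u i₀ v Rm hRm

end HeapPatience
end

section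
/- Fix a finite sequence of items (u_i,ν_i)_{1≤i≤n} with pairwise distinct labels in (0,1). For x ∈ (0,1], let R_{<x} be the number of heaps produced by the heap patience sorting algorithm applied to the subsequence, taken in the original order, of the items whose label is smaller than x. Then x ↦ R_{<x} is non-decreasing: for x ≤ y one has R_{<x} ≤ R_{<y}; in particular, restricting to the items with labels below a threshold never requires more heaps than the full sequence. -/
open MeasureTheory ProbabilityTheory Filter Topology
open scoped ENNReal NNReal

namespace HeapPatience

/-!
Run the algorithm on the items below `x` and, in parallel, on the items below `y ≥ x`.
At every moment, the particles of the second run with label below `x` are those of the first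
run, in the same order, each with at most as many lives, and the second run has created at
least as many roots. An item with label below `x` therefore finds in the second run an alive
parent only if it finds one in the first run, and that parent is never higher than the first
run's, so the lives lost keep the domination. An item with label in `[x, y)` is seen by the
second run only; it adds a particle invisible below `x` and either a root or the loss of a life.
-/

open List

noncomputable def below (x : ℝ) (L : List (ℝ × ℕ)) : List (ℝ × ℕ) :=
  L.filter fun p => decide (p.1 < x)

noncomputable def aliveBelow (u : ℝ) (L : List (ℝ × ℕ)) : List (ℝ × ℕ) :=
  L.filter fun p => decide (0 < p.2 ∧ p.1 < u)

def LivesLE (q p : ℝ × ℕ) : Prop := q.1 = p.1 ∧ q.2 ≤ p.2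

lemma below_below {x y : ℝ} (hxy : x ≤ y) (L : List (ℝ × ℕ)) :
    below x (below y L) = below x L := by
  simp only [below, filter_filter]
  refine filter_congr fun p _ => ?_
  by_cases h : p.1 < x
  · simp [h, h.trans_le hxy]
  · simp [h]

lemma mem_aliveBelow {u : ℝ} {L : List (ℝ × ℕ)} {p : ℝ × ℕ} :
    p ∈ aliveBelow u L ↔ p ∈ L ∧ 0 < p.2 ∧ p.1 < u := by
  simp [aliveBelow]

lemma aliveBelow_below {u x : ℝ} (hux : u ≤ x) (L : List (ℝ × ℕ)) :
    aliveBelow u (below x L) = aliveBelow u L := by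
  simp only [aliveBelow, below, filter_filter]
  refine filter_congr fun p _ => ?_
  by_cases h : p.1 < u
  · simp [h, h.trans_le hux]
  · simp [h]

section decrementAt

variable {T S : List (ℝ × ℕ)} {a x : ℝ}

lemma decrementAt_eq_self (h : ∀ p ∈ T, p.1 = a → p.2 = 0) : decrementAt T a = T := by
  induction T with
  | nil => rfl
  | cons p T ih =>
    have hp : ¬ (p.1 = a ∧ 0 < p.2) := fun ⟨hpa, hpos⟩ => hpos.ne' (h p mem_cons_self hpa)
    simp [decrementAt, hp, ih fun q hq => h q (mem_cons_of_mem _ hq)]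

lemma below_decrementAt_of_lt (hax : a < x) (T : List (ℝ × ℕ)) :
    below x (decrementAt T a) = decrementAt (below x T) a := by
  induction T with
  | nil => rfl
  | cons p T ih =>
    by_cases h : p.1 = a ∧ 0 < p.2
    · simp [below, decrementAt, h, hax]
    · rw [decrementAt, if_neg h]
      by_cases hpx : p.1 < x <;> simp_all [below, decrementAt]

lemma below_decrementAt_of_le (hxa : x ≤ a) (T : List (ℝ × ℕ)) :
    below x (decrementAt T a) = below x T := by
  induction T with
  | nil => rfl
  | cons p T ih =>
    by_cases h : p.1 = a ∧ 0 < p.2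
    · rw [decrementAt, if_pos h]
      simp [below, h.1, hxa.not_gt]
    · rw [decrementAt, if_neg h]
      by_cases hpx : p.1 < x <;> simp_all [below]

lemma forall₂_livesLE_decrementAt_left (h : Forall₂ LivesLE T S) :
    Forall₂ LivesLE (decrementAt T a) S := by
  induction h with
  | nil => exact .nil
  | @cons q p T S hqp htail ih =>
    by_cases hq : q.1 = a ∧ 0 < q.2
    · rw [decrementAt, if_pos hq]
      exact .cons ⟨hqp.1, (Nat.sub_le _ _).trans hqp.2⟩ htail
    · rw [decrementAt, if_neg hq]
      exact .cons hqp ih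

lemma forall₂_livesLE_decrementAt (h : Forall₂ LivesLE T S) :
    Forall₂ LivesLE (decrementAt T a) (decrementAt S a) := by
  induction h with
  | nil => exact .nil
  | @cons q p T S hqp htail ih =>
    obtain ⟨hlabel, hlives⟩ := hqp
    by_cases hq : q.1 = a ∧ 0 < q.2
    · rw [decrementAt, if_pos hq, decrementAt, if_pos ⟨hlabel ▸ hq.1, hq.2.trans_le hlives⟩]
      exact .cons ⟨hlabel, Nat.sub_le_sub_right hlives 1⟩ htail
    by_cases hp : p.1 = a ∧ 0 < p.2
    -- `q` is dead: the first run spends a life of `p`, the second one of a later particle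
    · have hq0 : q.2 = 0 := by grind
      rw [decrementAt, if_neg hq, decrementAt, if_pos hp]
      exact .cons ⟨hlabel, by omega⟩ (forall₂_livesLE_decrementAt_left htail)
    · rw [decrementAt, if_neg hq, decrementAt, if_neg hp]
      exact .cons ⟨hlabel, hlives⟩ ih

lemma forall₂_livesLE_decrementAt_right (h : Forall₂ LivesLE T S)
    (hdead : ∀ p ∈ T, p.1 = a → p.2 = 0) : Forall₂ LivesLE T (decrementAt S a) :=
  decrementAt_eq_self hdead ▸ forall₂_livesLE_decrementAt h

end decrementAt

lemma exists_mem_aliveBelow_of_forall₂ {T S : List (ℝ × ℕ)} (h : Forall₂ LivesLE T S)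
    {u : ℝ} {q : ℝ × ℕ} (hq : q ∈ aliveBelow u T) : ∃ p ∈ aliveBelow u S, p.1 = q.1 := by
  obtain ⟨p, hp, hlabel, hlives⟩ : ∃ p ∈ S, LivesLE q p := by
    induction h with
    | nil => simp [aliveBelow] at hq
    | @cons q' p' T S hqp _ ih =>
      rcases mem_cons.mp (mem_aliveBelow.mp hq).1 with rfl | hqT
      · exact ⟨p', mem_cons_self, hqp⟩
      · obtain ⟨p, hp, hrel⟩ := ih (mem_aliveBelow.mpr ⟨hqT, (mem_aliveBelow.mp hq).2⟩)
        exact ⟨p, mem_cons_of_mem _ hp, hrel⟩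
  obtain ⟨-, hpos, hu⟩ := mem_aliveBelow.mp hq
  exact ⟨p, mem_aliveBelow.mpr ⟨hp, hpos.trans_le hlives, hlabel ▸ hu⟩, hlabel.symm⟩

section argmax

variable {T S : List (ℝ × ℕ)} {u : ℝ} {q q' : ℝ × ℕ}

lemma argmax_aliveBelow_eq_none_of_forall₂ (h : Forall₂ LivesLE T S)
    (hS : (aliveBelow u S).argmax Prod.fst = none) :
    (aliveBelow u T).argmax Prod.fst = none := by
  refine argmax_eq_none.mpr (eq_nil_iff_forall_not_mem.mpr fun p hp => ?_)
  obtain ⟨p', hp', -⟩ := exists_mem_aliveBelow_of_forall₂ h hp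
  simp [argmax_eq_none.mp hS] at hp'

lemma argmax_aliveBelow_le_of_forall₂ (h : Forall₂ LivesLE T S)
    (hT : (aliveBelow u T).argmax Prod.fst = some q')
    (hS : (aliveBelow u S).argmax Prod.fst = some q) : q'.1 ≤ q.1 := by
  obtain ⟨p, hp, hlabel⟩ := exists_mem_aliveBelow_of_forall₂ h (argmax_mem hT)
  exact hlabel ▸ le_of_mem_argmax hp hS

lemma eq_zero_of_argmax_aliveBelow_lt {a : ℝ} (ha : a < u)
    (hT : ∀ q' : ℝ × ℕ, q' ∈ (aliveBelow u T).argmax Prod.fst → q'.1 < a) :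
    ∀ p ∈ T, p.1 = a → p.2 = 0 := by
  intro p hp hpa
  by_contra hpos
  have hmem : p ∈ aliveBelow u T := mem_aliveBelow.mpr ⟨hp, Nat.pos_of_ne_zero hpos, hpa ▸ ha⟩
  obtain ⟨q', hq'⟩ := Option.ne_none_iff_exists'.mp (mt (argmax_eq_none (f := Prod.fst)).mp (ne_nil_of_mem hmem))
  exact (le_of_mem_argmax hmem hq').not_gt (hpa ▸ hT q' hq')

end argmax

lemma step_of_argmax_eq_none {S : List (ℝ × ℕ)} {r : ℕ} {item : ℝ × ℕ}
    (h : (aliveBelow item.1 S).argmax Prod.fst = none) :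
    step (S, r) item = (item :: S, r + 1) := by
  simp only [step, aliveBelow, Bool.decide_and] at h ⊢
  rw [h]

lemma step_of_argmax_eq_some {S : List (ℝ × ℕ)} {r : ℕ} {item q : ℝ × ℕ}
    (h : (aliveBelow item.1 S).argmax Prod.fst = some q) :
    step (S, r) item = (item :: decrementAt S q.1, r) := by
  simp only [step, aliveBelow, Bool.decide_and] at h ⊢
  rw [h]

def Coupled (x : ℝ) (a b : List (ℝ × ℕ) × ℕ) : Prop :=
  Forall₂ LivesLE (below x b.1) a.1 ∧ a.2 ≤ b.2

namespace Coupled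

variable {x : ℝ} {a b : List (ℝ × ℕ) × ℕ} {item : ℝ × ℕ}

lemma step_of_le (h : Coupled x a b) (hx : x ≤ item.1) : Coupled x a (step b item) := by
  obtain ⟨T, rT⟩ := b
  have hbelow (L : List (ℝ × ℕ)) : below x (item :: L) = below x L := by
    simp [below, hx]
  rcases hTm : (aliveBelow item.1 T).argmax Prod.fst with _ | q
  · rw [step_of_argmax_eq_none hTm]
    exact ⟨hbelow T ▸ h.1, h.2.trans (Nat.le_succ _)⟩
  · rw [step_of_argmax_eq_some hTm]
    refine ⟨?_, h.2⟩
    dsimp only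
    rw [hbelow]
    by_cases hqx : q.1 < x
    · exact below_decrementAt_of_lt hqx T ▸ forall₂_livesLE_decrementAt_left h.1
    · exact below_decrementAt_of_le (not_lt.mp hqx) T ▸ h.1

lemma step_of_lt (h : Coupled x a b) (hx : item.1 < x) :
    Coupled x (step a item) (step b item) := by
  obtain ⟨S, rS⟩ := a
  obtain ⟨T, rT⟩ := b
  obtain ⟨hdom, hr⟩ := h
  simp only at hdom hr
  have hbelow (L : List (ℝ × ℕ)) : below x (item :: L) = item :: below x L := by
    simp [below, hx]
  have haliveT := aliveBelow_below (u := item.1) hx.le T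
  rcases hSm : (aliveBelow item.1 S).argmax Prod.fst with _ | q
  · have hTm := argmax_aliveBelow_eq_none_of_forall₂ hdom hSm
    rw [step_of_argmax_eq_none hSm, step_of_argmax_eq_none (haliveT ▸ hTm)]
    exact ⟨hbelow T ▸ .cons ⟨rfl, le_rfl⟩ hdom, Nat.succ_le_succ hr⟩
  have hq := (mem_aliveBelow.mp (argmax_mem hSm)).2.2
  rcases hTm : (aliveBelow item.1 (below x T)).argmax Prod.fst with _ | q'
  · rw [step_of_argmax_eq_some hSm, step_of_argmax_eq_none (haliveT ▸ hTm)]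
    refine ⟨hbelow T ▸ .cons ⟨rfl, le_rfl⟩ (forall₂_livesLE_decrementAt_right hdom ?_),
      hr.trans (Nat.le_succ _)⟩
    exact eq_zero_of_argmax_aliveBelow_lt hq (by simp [hTm])
  have hdom' : Forall₂ LivesLE (decrementAt (below x T) q'.1) (decrementAt S q.1) := by
    rcases (argmax_aliveBelow_le_of_forall₂ hdom hTm hSm).eq_or_lt with heq | hlt
    · exact heq ▸ forall₂_livesLE_decrementAt hdom
    · refine forall₂_livesLE_decrementAt_left (forall₂_livesLE_decrementAt_right hdom ?_)
      exact eq_zero_of_argmax_aliveBelow_lt hq (by simpa [hTm] using hlt)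
  rw [step_of_argmax_eq_some hSm, step_of_argmax_eq_some (haliveT ▸ hTm)]
  refine ⟨?_, hr⟩
  dsimp only
  rw [hbelow, below_decrementAt_of_lt ((mem_aliveBelow.mp (argmax_mem hTm)).2.2.trans hx)]
  exact .cons ⟨rfl, le_rfl⟩ hdom'

lemma foldl (h : Coupled x a b) (L : List (ℝ × ℕ)) :
    Coupled x ((below x L).foldl step a) (L.foldl step b) := by
  induction L generalizing a b with
  | nil => exact h
  | cons item L ih =>
    by_cases hx : item.1 < x
    · simpa [below, hx] using ih (h.step_of_lt hx)
    · simpa [below, hx] using ih (h.step_of_le (not_lt.mp hx))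

end Coupled

theorem R_threshold_monotone_general
    (items : List (ℝ × ℕ))
    (x y : ℝ) (hxy : x ≤ y) :
    R (items.filter fun p => decide (p.1 < x))
      ≤ R (items.filter fun p => decide (p.1 < y)) := by
  have h := (Coupled.foldl (x := x) (a := ([], 0)) (b := ([], 0)) ⟨.nil, le_rfl⟩
    (below y items)).2
  rwa [below_below hxy] at h

/-- Restricting the items to those with labels below a threshold `x` and raising the
threshold never decreases the number of heaps produced. -/
theorem R_threshold_monotone
    (items : List (ℝ × ℕ))
    (hlab : ∀ p ∈ items, p.1 ∈ Set.Ioo (0 : ℝ) 1)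
    (hlives : ∀ p ∈ items, 1 ≤ p.2)
    (hdist : items.Pairwise fun p q => p.1 ≠ q.1)
    (x y : ℝ) (hx : x ∈ Set.Ioc (0 : ℝ) 1) (hy : y ∈ Set.Ioc (0 : ℝ) 1) (hxy : x ≤ y) :
    R (items.filter fun p => decide (p.1 < x))
      ≤ R (items.filter fun p => decide (p.1 < y)) :=
  R_threshold_monotone_general items x y hxy

end HeapPatience
end
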